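/- Let Ex, En ∈ ℝ and He ≥ 0, and let μ be the cloud model CM(Ex, En, He). Then for every z ∈ ℝ, the characteristic function of μ factorizes as Φ_μ(z) = exp(i·z·Ex) · ∫ exp(−s²·z²/2) dν(s), where ν = N(En, He²). -/

import Mathlib

/-!
Conditionally on the scale `s`, the inner Gaussian `N(Ex, s²)` has characteristic function
`exp(i z Ex) · exp(-s² z² / 2)`. Since `|exp(i z x)| = 1`, Fubini applies to the kernel
composition, so `Φ_μ(z)` is the `ν`-average of these, and the factor `exp(i z Ex)` does not
depend on `s`.
-/

open MeasureTheory ProbabilityTheory Real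

/-- The characteristic function of a measure on `ℝ`, `Φ_μ(z) = ∫ exp(i z x) dμ(x)`. -/
noncomputable def charFunReal (μ : Measure ℝ) (z : ℝ) : ℂ :=
  ∫ x, Complex.exp (Complex.I * z * x) ∂μ

/-- The cloud model `CM(Ex, En, He)`: the mixture obtained by drawing `S ~ N(En, He²)`
and then `X | S = s ~ N(Ex, s²)`. -/
noncomputable def cloudModel (Ex En He : ℝ) : Measure ℝ :=
  (gaussianReal En ⟨He ^ 2, sq_nonneg He⟩).bind
    fun s => gaussianReal Ex ⟨s ^ 2, sq_nonneg s⟩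

open scoped NNReal InnerProductSpace

lemma charFunReal_eq_charFun (μ : Measure ℝ) (z : ℝ) : charFunReal μ z = charFun μ z := by
  simp only [charFunReal, charFun_apply_real]
  congr with x
  ring_nf

section Mixture

variable {α E : Type*} [MeasurableSpace α] [NormedAddCommGroup E] [InnerProductSpace ℝ E]
  [MeasurableSpace E] [OpensMeasurableSpace E]

lemma integrable_exp_inner_mul_I (μ : Measure E) [IsFiniteMeasure μ] (t : E) :
    Integrable (fun x => Complex.exp (⟪x, t⟫_ℝ * Complex.I)) μ :=
  (integrable_const (1 : ℂ)).mono (Continuous.aestronglyMeasurable (by fun_prop))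
    (ae_of_all _ fun x => by simp [Complex.norm_exp_ofReal_mul_I])

lemma charFun_comp {μ : Measure α} [IsFiniteMeasure μ] (κ : Kernel α E) [IsFiniteKernel κ]
    (t : E) : charFun (κ ∘ₘ μ) t = ∫ a, charFun (κ a) t ∂μ := by
  rw [charFun_apply, Measure.comp_eq_comp_const_apply,
    Kernel.integral_comp (integrable_exp_inner_mul_I _ t)]
  rfl

end Mixture

noncomputable def gaussianRealSqKernel (m : ℝ) : Kernel ℝ ℝ where
  toFun s := gaussianReal m ⟨s ^ 2, sq_nonneg s⟩
  measurable' :=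
    measurable_gaussianReal.comp (measurable_const.prodMk (measurable_id.pow_const 2).subtype_mk)

instance (m : ℝ) : IsMarkovKernel (gaussianRealSqKernel m) :=
  ⟨fun _ => instIsProbabilityMeasureGaussianReal _ _⟩

lemma cloudModel_eq_comp (Ex En He : ℝ) :
    cloudModel Ex En He =
      gaussianRealSqKernel Ex ∘ₘ gaussianReal En ⟨He ^ 2, sq_nonneg He⟩ :=
  rfl

lemma charFun_gaussianReal_eq_mul (m : ℝ) (v : ℝ≥0) (z : ℝ) :
    charFun (gaussianReal m v) z =
      Complex.exp (Complex.I * z * m) * (Real.exp (-(v * z ^ 2) / 2) : ℂ) := by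
  rw [charFun_gaussianReal, Complex.ofReal_exp, ← Complex.exp_add]
  push_cast
  ring_nf

lemma charFun_gaussianRealSqKernel (m s z : ℝ) :
    charFun (gaussianRealSqKernel m s) z =
      Complex.exp (Complex.I * z * m) * (Real.exp (-(s ^ 2 * z ^ 2) / 2) : ℂ) :=
  charFun_gaussianReal_eq_mul m _ z

lemma charFun_gaussianRealSqKernel_comp (m : ℝ) (ν : Measure ℝ) [IsFiniteMeasure ν] (z : ℝ) :
    charFun (gaussianRealSqKernel m ∘ₘ ν) z =
      Complex.exp (Complex.I * z * m) * ((∫ s, Real.exp (-(s ^ 2 * z ^ 2) / 2) ∂ν : ℝ) : ℂ) := by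
  simp only [charFun_comp, charFun_gaussianRealSqKernel]
  rw [integral_const_mul, integral_complex_ofReal]

theorem cloudModel_charFun_factorize_general (Ex En He : ℝ) (z : ℝ) :
    charFunReal (cloudModel Ex En He) z =
      Complex.exp (Complex.I * z * Ex) *
        ((∫ s, Real.exp (-(s ^ 2 * z ^ 2) / 2)
            ∂(gaussianReal En ⟨He ^ 2, sq_nonneg He⟩) : ℝ) : ℂ) := by
  -- `⟨He ^ 2, _⟩` is elaborated at type `{r // 0 ≤ r}`, not `ℝ≥0`, which hides the
  -- Gaussian's probability-measure instance from type-class search.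
  have := instIsProbabilityMeasureGaussianReal En ⟨He ^ 2, sq_nonneg He⟩
  rw [charFunReal_eq_charFun, cloudModel_eq_comp]
  exact charFun_gaussianRealSqKernel_comp Ex _ z

theorem cloudModel_charFun_factorize (Ex En He : ℝ) (hHe : 0 ≤ He) (z : ℝ) :
    charFunReal (cloudModel Ex En He) z =
      Complex.exp (Complex.I * z * Ex) *
        ((∫ s, Real.exp (-(s ^ 2 * z ^ 2) / 2)
            ∂(gaussianReal En ⟨He ^ 2, sq_nonneg He⟩) : ℝ) : ℂ) :=
  cloudModel_charFun_factorize_general Ex En He z
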